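/- arXiv:2009.09892 — 2 statements merged into one kernel-verified Lean document; each statement's English description precedes it below -/
import Mathlib

section
/- Let H be a complex Hilbert space and A a bounded linear operator on H. Then (1/4)·‖A*A + AA*‖ ≤ (1/2)·sqrt(2·ω(A)⁴ + (1/8)·ω((A* − A)²·(A* + A)²)). (Note that A*A = |A|² and AA* = |A*|².) -/
/-!
With `B = A† + A` and `C = A† - A` one has `B² - C² = 2 (A†A + AA†)`. Both `B` and `iC` are
self-adjoint with numerical values bounded by `2ω(A)`, so `‖B‖, ‖C‖ ≤ 2ω(A)`. Expanding
`‖(B² - C²)x‖²`, the cross term `⟪B²x, C²x⟫ = ⟪C²B²x, x⟫` (as `C²` is self-adjoint) is bounded by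
`ω(C²B²)‖x‖²`.
-/

/-- The numerical radius of a bounded linear operator on a complex Hilbert space:
`ω(A) = sup { ‖⟨Ax, x⟩‖ : ‖x‖ = 1 }`. -/
noncomputable def numericalRadius {H : Type*} [NormedAddCommGroup H] [InnerProductSpace ℂ H]
    [CompleteSpace H] (A : H →L[ℂ] H) : ℝ :=
  ⨆ x : {x : H // ‖x‖ = 1}, ‖(inner ℂ (A x) (x : H) : ℂ)‖

open ContinuousLinearMap
open scoped InnerProductSpace InnerProduct

lemma ContinuousLinearMap.opNorm_le_sqrt_of_norm_apply_sq_le {𝕜 E F : Type*} [RCLike 𝕜]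
    [SeminormedAddCommGroup E] [SeminormedAddCommGroup F] [NormedSpace 𝕜 E] [NormedSpace 𝕜 F]
    (T : E →L[𝕜] F) {K : ℝ} (h : ∀ x, ‖T x‖ ^ 2 ≤ K * ‖x‖ ^ 2) : ‖T‖ ≤ √K :=
  T.opNorm_le_bound (Real.sqrt_nonneg K) fun x => by
    rw [← Real.sqrt_sq (norm_nonneg x), ← Real.sqrt_mul' _ (sq_nonneg _)]
    exact Real.le_sqrt_of_sq_le (h x)

lemma bddAbove_norm_inner_apply_self {𝕜 E : Type*} [RCLike 𝕜] [NormedAddCommGroup E]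
    [InnerProductSpace 𝕜 E] (A : E →L[𝕜] E) :
    BddAbove (Set.range fun x : {x : E // ‖x‖ = 1} => ‖⟪A x, (x : E)⟫_𝕜‖) := by
  refine ⟨‖A‖, ?_⟩
  rintro _ ⟨⟨x, hx⟩, rfl⟩
  calc ‖⟪A x, x⟫_𝕜‖ ≤ ‖A x‖ * ‖x‖ := norm_inner_le_norm _ _
    _ ≤ ‖A‖ := by simpa [hx] using A.le_opNorm x

section NumericalRadius

variable {H : Type*} [NormedAddCommGroup H] [InnerProductSpace ℂ H] [CompleteSpace H]

lemma numericalRadius_nonneg (A : H →L[ℂ] H) : 0 ≤ numericalRadius A :=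
  Real.iSup_nonneg fun _ => norm_nonneg _

lemma norm_inner_apply_self_le_numericalRadius (A : H →L[ℂ] H) {x : H} (hx : ‖x‖ = 1) :
    ‖⟪A x, x⟫_ℂ‖ ≤ numericalRadius A :=
  le_ciSup (bddAbove_norm_inner_apply_self A) ⟨x, hx⟩

lemma norm_inner_apply_self_le (A : H →L[ℂ] H) (x : H) :
    ‖⟪A x, x⟫_ℂ‖ ≤ numericalRadius A * ‖x‖ ^ 2 := by
  rcases eq_or_ne x 0 with rfl | hx
  · simp
  have hx' : ‖x‖ ≠ 0 := norm_ne_zero_iff.mpr hx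
  have hunit : ‖(‖x‖⁻¹ : ℂ) • x‖ = 1 := by simp [norm_smul, hx']
  have h := norm_inner_apply_self_le_numericalRadius A hunit
  rw [map_smul, inner_smul_left, inner_smul_right, norm_mul, norm_mul] at h
  simp only [RCLike.norm_conj, norm_inv, Complex.norm_real, norm_norm] at h
  calc ‖⟪A x, x⟫_ℂ‖ = ‖x‖ ^ 2 * (‖x‖⁻¹ * (‖x‖⁻¹ * ‖⟪A x, x⟫_ℂ‖)) := by field_simp
    _ ≤ ‖x‖ ^ 2 * numericalRadius A := by gcongr
    _ = numericalRadius A * ‖x‖ ^ 2 := mul_comm _ _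

lemma numericalRadius_smul (c : ℂ) (A : H →L[ℂ] H) :
    numericalRadius (c • A) = ‖c‖ * numericalRadius A := by
  simp only [numericalRadius, Real.mul_iSup_of_nonneg (norm_nonneg c), smul_apply,
    inner_smul_left, norm_mul, RCLike.norm_conj]

lemma norm_adjoint_add_self_le (A : H →L[ℂ] H) : ‖A† + A‖ ≤ 2 * numericalRadius A := by
  have hsa : IsSelfAdjoint (A† + A) := by
    rw [← star_eq_adjoint]
    exact IsSelfAdjoint.star_add_self A
  rw [(A† + A).norm_eq_iSup_rayleighQuotient hsa.isSymmetric]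
  refine ciSup_le fun x => ?_
  have hre : RCLike.re ⟪(A† + A) x, x⟫_ℂ = 2 * RCLike.re ⟪A x, x⟫_ℂ := by
    rw [add_apply, inner_add_left, adjoint_inner_left, map_add,
      ← inner_conj_symm, RCLike.conj_re]
    ring
  rw [rayleighQuotient, reApplyInnerSelf_apply, abs_div,
    abs_sq]
  refine div_le_of_le_mul₀ (sq_nonneg _) (by linarith [numericalRadius_nonneg A]) ?_
  calc |RCLike.re ⟪(A† + A) x, x⟫_ℂ| = 2 * |RCLike.re ⟪A x, x⟫_ℂ| := by
        rw [hre, abs_mul, abs_two]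
    _ ≤ 2 * (numericalRadius A * ‖x‖ ^ 2) := by
        gcongr; exact (RCLike.abs_re_le_norm _).trans (norm_inner_apply_self_le A x)
    _ = 2 * numericalRadius A * ‖x‖ ^ 2 := by ring

lemma norm_adjoint_sub_self_le (A : H →L[ℂ] H) : ‖A† - A‖ ≤ 2 * numericalRadius A := by
  have hrot : (Complex.I • A)† + Complex.I • A = -Complex.I • (A† - A) := by
    rw [← star_eq_adjoint, star_smul, star_eq_adjoint,
      Complex.star_def, Complex.conj_I, smul_sub, neg_smul, neg_smul]
    abel
  have h := norm_adjoint_add_self_le (Complex.I • A)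
  rwa [hrot, numericalRadius_smul, norm_smul, norm_neg, Complex.norm_I, one_mul, one_mul] at h

lemma norm_sub_le_sqrt_of_isSelfAdjoint (P : H →L[ℂ] H) {Q : H →L[ℂ] H} (hQ : IsSelfAdjoint Q) :
    ‖P - Q‖ ≤ √(‖P‖ ^ 2 + ‖Q‖ ^ 2 + 2 * numericalRadius (Q * P)) := by
  refine (P - Q).opNorm_le_sqrt_of_norm_apply_sq_le fun x => ?_
  have hcross : ⟪P x, Q x⟫_ℂ = ⟪(Q * P) x, x⟫_ℂ := by
    rw [mul_apply_eq_comp, ← hQ.adjoint_eq, adjoint_inner_left, hQ.adjoint_eq]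
  have hP : ‖P x‖ ^ 2 ≤ ‖P‖ ^ 2 * ‖x‖ ^ 2 := by rw [← mul_pow]; gcongr; exact P.le_opNorm x
  have hQx : ‖Q x‖ ^ 2 ≤ ‖Q‖ ^ 2 * ‖x‖ ^ 2 := by rw [← mul_pow]; gcongr; exact Q.le_opNorm x
  have hre : -RCLike.re ⟪P x, Q x⟫_ℂ ≤ numericalRadius (Q * P) * ‖x‖ ^ 2 := by
    rw [hcross]
    exact (neg_le_abs _).trans ((RCLike.abs_re_le_norm _).trans (norm_inner_apply_self_le _ x))
  rw [sub_apply, @norm_sub_sq ℂ]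
  linarith

end NumericalRadius

theorem quarter_norm_le_half_sqrt
    {H : Type*} [NormedAddCommGroup H] [InnerProductSpace ℂ H] [CompleteSpace H]
    (A : H →L[ℂ] H) :
    (1 / 4) * ‖ContinuousLinearMap.adjoint A * A + A * ContinuousLinearMap.adjoint A‖ ≤
      (1 / 2) * Real.sqrt (2 * numericalRadius A ^ 4 +
        (1 / 8) * numericalRadius ((ContinuousLinearMap.adjoint A - A) ^ 2 *
          (ContinuousLinearMap.adjoint A + A) ^ 2)) := by
  set ω := numericalRadius A
  set m := numericalRadius ((A† - A) ^ 2 * (A† + A) ^ 2)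
  have hsq : ∀ {T : H →L[ℂ] H}, ‖T‖ ≤ 2 * ω → ‖T ^ 2‖ ^ 2 ≤ 16 * ω ^ 4 := fun {T} hT => by
    have := (norm_pow_le' T two_pos).trans (pow_le_pow_left₀ (norm_nonneg T) hT 2)
    nlinarith [norm_nonneg (T ^ 2)]
  have hskew : IsSelfAdjoint ((A† - A) ^ 2) := by
    rw [IsSelfAdjoint, star_pow, star_sub, star_eq_adjoint, star_eq_adjoint,
      adjoint_adjoint, ← neg_sub, neg_sq]
  have hdiff : (A† + A) ^ 2 - (A† - A) ^ 2 = (2 : ℂ) • (A† * A + A * A†) := by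
    rw [two_smul]; noncomm_ring
  calc (1 / 4) * ‖A† * A + A * A†‖ = (1 / 8) * ‖(A† + A) ^ 2 - (A† - A) ^ 2‖ := by
        rw [hdiff, norm_smul, Complex.norm_two]; ring
    _ ≤ (1 / 8) * √(16 * ω ^ 4 + 16 * ω ^ 4 + 2 * m) := by
        gcongr
        refine (norm_sub_le_sqrt_of_isSelfAdjoint _ hskew).trans (Real.sqrt_le_sqrt ?_)
        gcongr
        exacts [hsq (norm_adjoint_add_self_le A), hsq (norm_adjoint_sub_self_le A)]
    _ = (1 / 2) * √(2 * ω ^ 4 + (1 / 8) * m) := by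
        rw [show 16 * ω ^ 4 + 16 * ω ^ 4 + 2 * m = 4 ^ 2 * (2 * ω ^ 4 + (1 / 8) * m) by ring,
          Real.sqrt_mul (by norm_num), Real.sqrt_sq (by norm_num)]
        ring
end

section
/- Let H be a complex Hilbert space and A a bounded linear operator on H. Then ω(A) ≤ (1/2)·‖ |A| + |A*| ‖, where |A| = (A*A)^{1/2} and |A*| = (AA*)^{1/2}. -/
/-- The absolute value `|A| = (A*A)^(1/2)` of a bounded operator, via the square root
from the continuous functional calculus. -/
noncomputable def opAbs {H : Type*} [NormedAddCommGroup H] [InnerProductSpace ℂ H]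
    [CompleteSpace H] (A : H →L[ℂ] H) : H →L[ℂ] H :=
  CFC.sqrt (ContinuousLinearMap.adjoint A * A)

/-!
For `ε > 0` let `p = (|A| + ε)^(1/2)`, a function of `A*A`, and `b = A p⁻¹`. Then `A = b p`, so
`|⟨Ax, x⟩| = |⟨px, b*x⟩| ≤ (‖px‖² + ‖b*x‖²) / 2 = ⟨(p*p + bb*)x, x⟩ / 2`, and `p*p = |A| + ε`.
The intertwining `A f(A*A) = f(AA*) A`, which holds for polynomials and hence, by Weierstrass
approximation, for all continuous `f`, turns `bb* = A (|A| + ε)⁻¹ A*` into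
`(|A*| + ε)⁻¹ |A*|² ≤ |A*|`. Hence `|⟨Ax, x⟩| ≤ (‖|A| + |A*|‖ + ε) / 2` for unit `x`.
-/

open ContinuousLinearMap RCLike

section FunctionalCalculus

variable {A : Type*} [Ring A] [StarRing A] [TopologicalSpace A] [IsTopologicalRing A]
  [T2Space A] [Algebra ℝ A] [ContinuousFunctionalCalculus ℝ A IsSelfAdjoint]

theorem SemiconjBy.cfc_real {x a b : A} (h : SemiconjBy x a b) (f : ℝ → ℝ)
    (hf : ContinuousOn f (spectrum ℝ a ∪ spectrum ℝ b)) (ha : IsSelfAdjoint a)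
    (hb : IsSelfAdjoint b) : SemiconjBy x (cfc f a) (cfc f b) := by
  set s := spectrum ℝ a ∪ spectrum ℝ b
  have : CompactSpace s := isCompact_iff_compactSpace.mp <|
    (ContinuousFunctionalCalculus.isCompact_spectrum a).union
      (ContinuousFunctionalCalculus.isCompact_spectrum b)
  let φ := cfcHomSuperset ha (Set.subset_union_left (t := spectrum ℝ b))
  let ψ := cfcHomSuperset hb (Set.subset_union_right (s := spectrum ℝ a))
  have hsemiconj (g : C(s, ℝ)) : SemiconjBy x (φ g) (ψ g) := by
    induction g using ContinuousMap.induction_on_of_compact with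
    | const r =>
      rw [show ContinuousMap.const s r = algebraMap ℝ C(s, ℝ) r from rfl, AlgHomClass.commutes,
        AlgHomClass.commutes]
      exact (Algebra.commutes r x).symm
    | id => rwa [cfcHomSuperset_id, cfcHomSuperset_id]
    | star_id => rwa [star_trivial, cfcHomSuperset_id, cfcHomSuperset_id]
    | add f g hf hg => rw [map_add, map_add]; exact hf.add_right hg
    | mul f g hf hg => rw [map_mul, map_mul]; exact hf.mul_right hg
    | frequently f hf =>
      exact (isClosed_eq (continuous_const.mul (cfcHomSuperset_continuous ..))
        ((cfcHomSuperset_continuous ..).mul continuous_const)).mem_of_frequently_of_tendsto hf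
        Filter.tendsto_id
  convert hsemiconj ⟨s.domRestrict f, hf.domRestrict⟩ using 1
  · rw [cfcHomSuperset_apply, cfc_apply f a ha (hf.mono Set.subset_union_left)]; rfl
  · rw [cfcHomSuperset_apply, cfc_apply f b hb (hf.mono Set.subset_union_right)]; rfl

theorem mul_cfc_star_mul_self (x : A) {f : ℝ → ℝ} (hf : Continuous f) :
    x * cfc f (star x * x) = cfc f (x * star x) * x :=
  SemiconjBy.cfc_real (mul_assoc x (star x) x).symm f hf.continuousOn
    (.star_mul_self x) (.mul_star_self x)

end FunctionalCalculus

section CStarAlgebra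

variable {A : Type*} [CStarAlgebra A] [PartialOrder A] [StarOrderedRing A]

namespace CFC

theorem abs_eq_cfc_sqrt (x : A) : abs x = cfc Real.sqrt (star x * x) := by
  rw [abs, sqrt_eq_real_sqrt _ (star_mul_self_nonneg x), cfcₙ_eq_cfc]

theorem exists_eq_mul_star_mul_eq_abs_add (x : A) {ε : ℝ} (hε : 0 < ε) :
    ∃ b p : A, x = b * p ∧ star p * p = abs x + ε • 1 ∧ b * star b ≤ abs (star x) := by
  set a := star x * x
  have hsum_pos (t : ℝ) : 0 < √t + ε := by positivity
  let s (t : ℝ) := √(√t + ε)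
  let g (t : ℝ) := (√t + ε)⁻¹
  have hs : Continuous s := by fun_prop
  have hs_pos (t : ℝ) : 0 < s t := Real.sqrt_pos.mpr (hsum_pos t)
  have hr : Continuous fun t ↦ (s t)⁻¹ := hs.inv₀ fun t ↦ (hs_pos t).ne'
  have hg : Continuous g := by fun_prop (disch := exact fun t ↦ (hsum_pos t).ne')
  have star_cfc (f : ℝ → ℝ) : star (cfc f a) = cfc f a := (cfc_predicate (R := ℝ) f a).star_eq
  set p := cfc s a
  set q := cfc (fun t ↦ (s t)⁻¹) a
  have hqp : q * p = 1 := by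
    rw [← cfc_mul _ _ a hr.continuousOn hs.continuousOn, ← cfc_one ℝ a]
    exact cfc_congr fun t _ ↦ inv_mul_cancel₀ (hs_pos t).ne'
  refine ⟨x * q, p, by rw [mul_assoc, hqp, mul_one], ?_, ?_⟩
  · rw [star_cfc, ← cfc_mul s s a hs.continuousOn hs.continuousOn, abs_eq_cfc_sqrt,
      ← Algebra.algebraMap_eq_smul_one, ← cfc_const ε a,
      ← cfc_add a _ _ Real.continuous_sqrt.continuousOn continuousOn_const]
    exact cfc_congr fun t _ ↦ Real.mul_self_sqrt (hsum_pos t).le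
  · have hqq : q * star q = cfc g a := by
      rw [star_cfc, ← cfc_mul _ _ a hr.continuousOn hr.continuousOn]
      exact cfc_congr fun t _ ↦ by rw [← mul_inv, Real.mul_self_sqrt (hsum_pos t).le]
    calc x * q * star (x * q) = x * cfc g a * star x := by
          rw [star_mul, mul_assoc, ← mul_assoc q, hqq, ← mul_assoc]
      _ = cfc (fun t ↦ g t * t) (x * star x) := by
          rw [mul_cfc_star_mul_self x hg, mul_assoc,
            cfc_mul g (fun t ↦ t) _ hg.continuousOn continuousOn_id, cfc_id' ℝ (x * star x)]
      _ ≤ cfc Real.sqrt (x * star x) := by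
          refine cfc_mono (fun t ht ↦ ?_) (hg.mul continuous_id).continuousOn
            Real.continuous_sqrt.continuousOn
          have ht0 : 0 ≤ t := spectrum_nonneg_of_nonneg (mul_star_self_nonneg x) ht
          rw [inv_mul_le_iff₀ (hsum_pos t)]
          nlinarith [Real.mul_self_sqrt ht0, Real.sqrt_nonneg t]
      _ = abs (star x) := by rw [abs_eq_cfc_sqrt, star_star]

end CFC

end CStarAlgebra

section InnerProductSpace

variable {𝕜 E : Type*} [RCLike 𝕜] [NormedAddCommGroup E] [InnerProductSpace 𝕜 E]

theorem ContinuousLinearMap.re_inner_apply_le_of_le {T S : E →L[𝕜] E} (h : T ≤ S) (x : E) :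
    re (inner 𝕜 (T x) x) ≤ re (inner 𝕜 (S x) x) := by
  have := ((le_def T S).mp h).re_inner_nonneg_left x
  rwa [sub_apply, inner_sub_left, map_sub, sub_nonneg] at this

theorem ContinuousLinearMap.re_inner_apply_le_norm (T : E →L[𝕜] E) {x : E} (hx : ‖x‖ = 1) :
    re (inner 𝕜 (T x) x) ≤ ‖T‖ :=
  calc re (inner 𝕜 (T x) x) ≤ ‖T x‖ * ‖x‖ := re_inner_le_norm _ _
    _ ≤ ‖T‖ * ‖x‖ * ‖x‖ := by gcongr; exact le_opNorm T x
    _ = ‖T‖ := by rw [hx, mul_one, mul_one]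

theorem ContinuousLinearMap.norm_inner_mul_apply_le [CompleteSpace E] (B P : E →L[𝕜] E) (x : E) :
    ‖inner 𝕜 ((B * P) x) x‖ ≤ re (inner 𝕜 ((adjoint P * P + B * adjoint B) x) x) / 2 := by
  have hP := apply_norm_sq_eq_inner_adjoint_left P x
  have hB := apply_norm_sq_eq_inner_adjoint_left (adjoint B) x
  rw [adjoint_adjoint] at hB
  calc ‖inner 𝕜 ((B * P) x) x‖ = ‖inner 𝕜 (P x) (adjoint B x)‖ := by
        rw [adjoint_inner_right]; rfl
    _ ≤ ‖P x‖ * ‖adjoint B x‖ := norm_inner_le_norm _ _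
    _ ≤ (‖P x‖ ^ 2 + ‖adjoint B x‖ ^ 2) / 2 := by
        nlinarith [sq_nonneg (‖P x‖ - ‖adjoint B x‖)]
    _ = re (inner 𝕜 ((adjoint P * P + B * adjoint B) x) x) / 2 := by
        rw [hP, hB, add_apply, inner_add_left, map_add]; rfl

end InnerProductSpace

theorem numericalRadius_le_half_norm_abs_add_abs_adjoint
    {H : Type*} [NormedAddCommGroup H] [InnerProductSpace ℂ H] [CompleteSpace H]
    (A : H →L[ℂ] H) :
    numericalRadius A ≤
      (1 / 2) * ‖opAbs A + opAbs (ContinuousLinearMap.adjoint A)‖ := by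
  refine Real.iSup_le (fun x ↦ le_of_forall_pos_le_add fun ε hε ↦ ?_) (by positivity)
  obtain ⟨B, P, hBP, hP, hB⟩ := CFC.exists_eq_mul_star_mul_eq_abs_add A hε
  set S := opAbs A + opAbs (adjoint A)
  have hle : adjoint P * P + B * adjoint B ≤ S + ε • 1 := by
    rw [add_right_comm]
    exact add_le_add hP.le hB
  calc ‖inner ℂ (A x) (x : H)‖ = ‖inner ℂ ((B * P) x) (x : H)‖ := by rw [← hBP]
    _ ≤ re (inner ℂ ((adjoint P * P + B * adjoint B) x) (x : H)) / 2 :=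
        norm_inner_mul_apply_le B P x
    _ ≤ re (inner ℂ ((S + ε • 1) x) (x : H)) / 2 := by
        linarith [re_inner_apply_le_of_le hle (x : H)]
    _ = (re (inner ℂ (S x) (x : H)) + ε) / 2 := by
        simp [x.2]
    _ ≤ (‖S‖ + ε) / 2 := by gcongr; exact re_inner_apply_le_norm S x.2
    _ ≤ 1 / 2 * ‖S‖ + ε := by linarith
end
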